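/- For k ≥ 1 and 1 ≤ s ≤ k, the number of binary words x of length 2k with |Z(x)| = s equals 2·C(2k, k-s). -/

import Mathlib

/-- Number of 0's (`false`) at odd positions (1-based) of a binary word. -/
def oddZeros (x : List Bool) : ℕ :=
  ((x.zipIdx.map Prod.swap).filter (fun p => p.1 % 2 = 0 && p.2 == false)).length

/-- Number of 0's (`false`) at even positions (1-based) of a binary word. -/
def evenZeros (x : List Bool) : ℕ :=
  ((x.zipIdx.map Prod.swap).filter (fun p => p.1 % 2 = 1 && p.2 == false)).length

/-- Z(x) = odd(x) - even(x). -/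
def Zw (x : List Bool) : ℤ := (oddZeros x : ℤ) - (evenZeros x : ℤ)

/-!
Flipping the letters at the even (1-based) positions of `x` keeps the zeros at odd positions and
turns the zeros at even positions into ones, so the flipped word has
`odd(x) + (k - even(x)) = Z(x) + k` zeros. Hence `Z(x) = t` for exactly `C(2k, k + t)` words; for
`s ≥ 1` the cases `Z = s` and `Z = -s` are disjoint, and `C(2k, k + s) = C(2k, k - s)`.
-/

open Finset

theorem List.countP_ofFn {α : Type*} {n : ℕ} (f : Fin n → α) (p : α → Bool) :
    (List.ofFn f).countP p = #{i | p (f i)} := by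
  induction n with
  | zero => simp
  | succ n ih => rw [List.ofFn_succ, List.countP_cons, ih, Fin.card_filter_univ_succ', add_comm]

theorem List.zipIdx_ofFn {α : Type*} {n : ℕ} (f : Fin n → α) :
    (List.ofFn f).zipIdx = List.ofFn fun i => (f i, i.val) := by
  apply List.ext_getElem <;> simp

theorem List.length_filter_map_swap_zipIdx_ofFn {α : Type*} {n : ℕ} (f : Fin n → α)
    (p : ℕ × α → Bool) :
    (((List.ofFn f).zipIdx.map Prod.swap).filter p).length = #{i | p (i.val, f i)} := by
  rw [← List.countP_eq_length_filter, List.countP_map, List.zipIdx_ofFn, List.countP_ofFn]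
  rfl

-- `Fin` indices are 0-based, so the odd positions of the definitions have even index.
theorem oddZeros_ofFn {n : ℕ} (x : Fin n → Bool) :
    oddZeros (List.ofFn x) = #{i : Fin n | Even i.val ∧ x i = false} := by
  simp [oddZeros, List.length_filter_map_swap_zipIdx_ofFn, Nat.even_iff]

theorem evenZeros_ofFn {n : ℕ} (x : Fin n → Bool) :
    evenZeros (List.ofFn x) = #{i : Fin n | Odd i.val ∧ x i = false} := by
  simp [evenZeros, List.length_filter_map_swap_zipIdx_ofFn, Nat.odd_iff]

theorem Fin.card_filter_odd_val_two_mul (k : ℕ) : #{i : Fin (2 * k) | Odd i.val} = k := by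
  rw [card_filter, Fin.sum_univ_eq_sum_range (fun i => if Odd i then 1 else 0), ← card_filter]
  have := Nat.card_multiples (2 * k) 2
  simp only [← even_iff_two_dvd, Nat.even_add_one, Nat.not_even_iff_odd] at this
  omega

-- `x i = decide (Odd i)` says that the flipped letter at `i` is a zero.
theorem Zw_ofFn_add_eq_card {k : ℕ} (x : Fin (2 * k) → Bool) :
    Zw (List.ofFn x) + k = #{i | x i = decide (Odd i.val)} := by
  have hk : (k : ℤ) = #{i : Fin (2 * k) | Odd i.val} := by
    rw [Fin.card_filter_odd_val_two_mul]
  rw [Zw, oddZeros_ofFn, evenZeros_ofFn, hk]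
  simp only [card_filter, Nat.cast_sum, Nat.cast_ite, Nat.cast_one, Nat.cast_zero,
    ← sum_sub_distrib, ← sum_add_distrib]
  refine sum_congr rfl fun i _ => ?_
  rcases Nat.even_or_odd i.val with h | h <;> cases x i <;>
    simp [h, Nat.not_odd_iff_even.mpr, Nat.not_even_iff_odd.mpr]

theorem card_filter_card_filter_eq_eq_choose {ι : Type*} [Fintype ι] [DecidableEq ι]
    (c : ι → Bool) (m : ℕ) :
    #{x : ι → Bool | #{i | x i = c i} = m} = (Fintype.card ι).choose m := by
  rw [← card_univ, ← card_powersetCard]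
  refine card_nbij' (fun x => ({i | x i = c i} : Finset ι))
    (fun S i => if i ∈ S then c i else !c i) ?_ ?_ ?_ ?_
  · intro x hx
    simpa [mem_powersetCard] using hx
  · intro S hS
    simpa [mem_powersetCard] using hS
  · intro x _
    funext i
    cases hx : x i <;> cases hc : c i <;> simp [hx, hc]
  · intro S _
    ext i
    by_cases h : i ∈ S <;> simp [h]

theorem card_Zw_add_eq {k : ℕ} (m : ℕ) :
    #{x : Fin (2 * k) → Bool | Zw (List.ofFn x) + k = m} = (2 * k).choose m := by
  simp only [Zw_ofFn_add_eq_card, Nat.cast_inj]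
  rw [card_filter_card_filter_eq_eq_choose, Fintype.card_fin]

theorem card_absZ_eq_s_even_length_general (k s : ℕ) (hs1 : 1 ≤ s) (hsk : s ≤ k) :
    (Finset.univ.filter (fun x : Fin (2 * k) → Bool => |Zw (List.ofFn x)| = (s : ℤ))).card =
      2 * Nat.choose (2 * k) (k - s) := by
  have hZ (z : ℤ) : |z| = s ↔ z + k = (k + s : ℕ) ∨ z + k = (k - s : ℕ) := by
    rw [abs_eq (Int.natCast_nonneg s)]
    omega
  rw [filter_congr fun x _ => hZ _, filter_or,
    card_union_of_disjoint (disjoint_filter.2 fun x _ => by omega),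
    card_Zw_add_eq, card_Zw_add_eq, Nat.choose_symm_of_eq_add (by omega : 2 * k = k + s + (k - s))]
  ring

theorem card_absZ_eq_s_even_length (k s : ℕ) (hk : 1 ≤ k) (hs1 : 1 ≤ s) (hsk : s ≤ k) :
    (Finset.univ.filter (fun x : Fin (2 * k) → Bool => |Zw (List.ofFn x)| = (s : ℤ))).card =
      2 * Nat.choose (2 * k) (k - s) :=
  card_absZ_eq_s_even_length_general k s hs1 hsk
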